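/- The group homomorphism η : B(K_n) → B(A_n) defined by a_i ↦ c_i (with c_n = σ_n, c_k = σ_k^{-1} c_{k+1} σ_k) is surjective. -/

import Mathlib

/-- The braid relations of type `A_n` on generators `σ_1, …, σ_n`
(encoded with `0`-based indices `0, …, n-1`). -/
def braidRelsA (n : ℕ) : Set (FreeGroup (Fin n)) :=
  {r | (∃ i j : Fin n, (i : ℕ) + 1 = (j : ℕ) ∧
        r = .of i * .of j * .of i * (.of j * .of i * .of j)⁻¹) ∨
      (∃ i j : Fin n, (i : ℕ) + 1 < (j : ℕ) ∧
        r = .of i * .of j * (.of j * .of i)⁻¹)}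

/-- The Artin braid group `B(A_n)` with generators `σ_1, …, σ_n`. -/
abbrev BraidA (n : ℕ) := PresentedGroup (braidRelsA n)

/-- The generator `σ_{k+1}` of `B(A_n)` (`0`-based index `k`). -/
def σA {n : ℕ} (k : ℕ) : BraidA n :=
  if h : k < n then PresentedGroup.of ⟨k, h⟩ else 1

/-- The elements `c_k` (`0`-based: `cA n k` is `c_{k+1}` of the paper):
`c_n := σ_n` and `c_k := σ_k⁻¹ * c_{k+1} * σ_k`. -/
def cA (n : ℕ) (k : ℕ) : BraidA n :=
  if _h : k + 1 < n then (σA k)⁻¹ * cA n (k + 1) * σA k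
  else if _h2 : k < n then σA k else 1
  termination_by n - k
  decreasing_by omega

/-- The relations of the braid group `B(K_n)` whose Coxeter graph is the
complete graph on `n` vertices: `a_i a_j a_i = a_j a_i a_j` for all `i ≠ j`. -/
def braidRelsK (n : ℕ) : Set (FreeGroup (Fin n)) :=
  {r | ∃ i j : Fin n, i ≠ j ∧
        r = .of i * .of j * .of i * (.of j * .of i * .of j)⁻¹}

/-- The braid group `B(K_n)` of the complete graph on `n` vertices. -/
abbrev BraidK (n : ℕ) := PresentedGroup (braidRelsK n)

/-- The generator `a_{k+1}` of `B(K_n)` (`0`-based index `k`). -/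
def aK {n : ℕ} (k : ℕ) : BraidK n :=
  if h : k < n then PresentedGroup.of ⟨k, h⟩ else 1

/-!
Since `σ_k` braids with `c_{k+1}`, the conjugate `c_k = σ_k⁻¹ c_{k+1} σ_k` equals
`c_{k+1} σ_k c_{k+1}⁻¹`, whence `σ_k = c_k c_{k+1} c_k⁻¹`: the `c_i` generate `B(A_n)`.
That `a_i ↦ c_i` respects the relations of `B(K_n)` follows by descending induction on `k`,
because conjugation preserves braid relations and `σ_k` commutes with `c_l` for `l ≥ k + 2`.
-/

section BraidRelation

variable {G : Type*} [Group G] {a b c : G}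

theorem inv_mul_mul_eq_of_braid (h : a * b * a = b * a * b) : a⁻¹ * b * a = b * a * b⁻¹ := by
  calc a⁻¹ * b * a = a⁻¹ * (b * a * b) * b⁻¹ := by group
    _ = a⁻¹ * (a * b * a) * b⁻¹ := by rw [h]
    _ = b * a * b⁻¹ := by group

theorem braid_conj (g : G) (h : a * b * a = b * a * b) :
    (g * a * g⁻¹) * (g * b * g⁻¹) * (g * a * g⁻¹) =
      (g * b * g⁻¹) * (g * a * g⁻¹) * (g * b * g⁻¹) := by
  calc (g * a * g⁻¹) * (g * b * g⁻¹) * (g * a * g⁻¹) = g * (a * b * a) * g⁻¹ := by group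
    _ = g * (b * a * b) * g⁻¹ := by rw [h]
    _ = (g * b * g⁻¹) * (g * a * g⁻¹) * (g * b * g⁻¹) := by group

theorem braid_conj_of_commute (h : a * b * a = b * a * b) (hc : Commute c b) :
    (c⁻¹ * a * c) * b * (c⁻¹ * a * c) = b * (c⁻¹ * a * c) * b := by
  have := braid_conj c⁻¹ h
  rwa [hc.inv_left.mul_inv_cancel, inv_inv] at this

theorem braid_inv_mul_mul (h : a * b * a = b * a * b) :
    (a⁻¹ * b * a) * b * (a⁻¹ * b * a) = b * (a⁻¹ * b * a) * b := by
  rw [inv_mul_mul_eq_of_braid h]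
  simpa only [mul_inv_cancel_right] using braid_conj b h

theorem braid_inv_mul_mul_of_commute (hab : a * b * a = b * a * b) (hbc : b * c * b = c * b * c)
    (hac : Commute a c) : a * (b⁻¹ * c * b) * a = (b⁻¹ * c * b) * a * (b⁻¹ * c * b) := by
  rw [inv_mul_mul_eq_of_braid hbc]
  simpa only [hac.symm.mul_inv_cancel] using braid_conj c hab

theorem inv_mul_mul_conj_eq_of_braid (h : a * b * a = b * a * b) :
    (a⁻¹ * b * a) * b * (a⁻¹ * b * a)⁻¹ = a := by
  rw [inv_mul_mul_eq_of_braid h]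
  calc (b * a * b⁻¹) * b * (b * a * b⁻¹)⁻¹ = (b * a * b) * a⁻¹ * b⁻¹ := by group
    _ = (a * b * a) * a⁻¹ * b⁻¹ := by rw [← h]
    _ = a := by group

end BraidRelation

section BraidA

variable {n : ℕ}

theorem σA_of_lt {k : ℕ} (hk : k < n) : σA (n := n) k = PresentedGroup.of ⟨k, hk⟩ :=
  dif_pos hk

theorem σA_braid_succ {i : ℕ} (hi : i + 1 < n) :
    σA (n := n) i * σA (i + 1) * σA i = σA (i + 1) * σA i * σA (i + 1) := by
  have hrel := PresentedGroup.mk_eq_mk_of_mul_inv_mem (rels := braidRelsA n)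
    (Or.inl ⟨⟨i, by omega⟩, ⟨i + 1, hi⟩, rfl, rfl⟩)
  rw [σA_of_lt hi, σA_of_lt (by omega)]
  simp only [map_mul] at hrel
  exact hrel

theorem σA_commute {i j : ℕ} (hij : i + 1 < j) : Commute (σA (n := n) i) (σA j) := by
  by_cases hj : j < n
  · have hrel := PresentedGroup.mk_eq_mk_of_mul_inv_mem (rels := braidRelsA n)
      (Or.inr ⟨⟨i, by omega⟩, ⟨j, hj⟩, hij, rfl⟩)
    rw [σA_of_lt hj, σA_of_lt (by omega)]
    simp only [map_mul] at hrel
    exact hrel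
  · simp only [σA, hj, dite_false, Commute.one_right]

theorem cA_of_succ_lt {k : ℕ} (hk : k + 1 < n) :
    cA n k = (σA k)⁻¹ * cA n (k + 1) * σA k := by
  rw [cA, dif_pos hk]

theorem cA_of_succ_eq {k : ℕ} (hk : k + 1 = n) : cA n k = σA k := by
  rw [cA, dif_neg (by omega), dif_pos (by omega)]

theorem σA_commute_cA {k j : ℕ} (h : k + 2 ≤ j) : Commute (σA (n := n) k) (cA n j) := by
  by_cases hj : j + 1 < n
  · rw [cA_of_succ_lt hj]
    have hσ : Commute (σA (n := n) k) (σA j) := σA_commute (by omega)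
    exact (hσ.inv_right.mul_right (σA_commute_cA (by omega))).mul_right hσ
  · rw [cA, dif_neg hj]
    split_ifs
    · exact σA_commute (by omega)
    · exact Commute.one_right _
termination_by n - j

theorem σA_braid_cA_succ {k : ℕ} (hk : k + 1 < n) :
    σA k * cA n (k + 1) * σA k = cA n (k + 1) * σA k * cA n (k + 1) := by
  by_cases hk' : k + 2 < n
  · rw [cA_of_succ_lt hk']
    exact braid_inv_mul_mul_of_commute (σA_braid_succ hk) (σA_braid_cA_succ hk')
      (σA_commute_cA le_rfl)
  · rw [cA_of_succ_eq (by omega)]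
    exact σA_braid_succ hk
termination_by n - k

theorem cA_braid {k l : ℕ} (hkl : k < l) (hl : l < n) :
    cA n k * cA n l * cA n k = cA n l * cA n k * cA n l := by
  rw [cA_of_succ_lt (by omega : k + 1 < n)]
  rcases (by omega : l = k + 1 ∨ k + 2 ≤ l) with rfl | hkl'
  · exact braid_inv_mul_mul (σA_braid_cA_succ hl)
  · exact braid_conj_of_commute (cA_braid (by omega) hl) (σA_commute_cA hkl')
termination_by l - k

theorem σA_eq_cA_conj {k : ℕ} (hk : k + 1 < n) :
    σA k = cA n k * cA n (k + 1) * (cA n k)⁻¹ := by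
  rw [cA_of_succ_lt hk, inv_mul_mul_conj_eq_of_braid (σA_braid_cA_succ hk)]

theorem closure_range_cA : Subgroup.closure (Set.range fun i : Fin n ↦ cA n i) = ⊤ := by
  rw [eq_top_iff, ← PresentedGroup.closure_range_of, Subgroup.closure_le]
  rintro - ⟨⟨k, hk⟩, rfl⟩
  have mem : ∀ i, i < n → cA n i ∈ Subgroup.closure (Set.range fun i : Fin n ↦ cA n i) :=
    fun i hi ↦ Subgroup.subset_closure ⟨⟨i, hi⟩, rfl⟩
  rw [← σA_of_lt hk]
  rcases (by omega : k + 1 < n ∨ k + 1 = n) with hk' | hk'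
  · rw [σA_eq_cA_conj hk']
    exact mul_mem (mul_mem (mem k hk) (mem _ hk')) (inv_mem (mem k hk))
  · rw [← cA_of_succ_eq hk']
    exact mem k hk

end BraidA

theorem aK_of_lt {n k : ℕ} (hk : k < n) : aK (n := n) k = PresentedGroup.of ⟨k, hk⟩ :=
  dif_pos hk

theorem lift_cA_braidRelsK (n : ℕ) :
    ∀ r ∈ braidRelsK n, FreeGroup.lift (fun i : Fin n ↦ cA n i) r = 1 := by
  rintro - ⟨i, j, hij, rfl⟩
  simp only [map_mul, map_inv, FreeGroup.lift_apply_of, mul_inv_eq_one]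
  rcases Fin.lt_or_lt_of_ne hij with h | h
  · exact cA_braid h j.isLt
  · exact (cA_braid h i.isLt).symm

/-- The paper's `η`. -/
def BraidK.toBraidA (n : ℕ) : BraidK n →* BraidA n :=
  PresentedGroup.toGroup (lift_cA_braidRelsK n)

theorem BraidK.toBraidA_aK {n : ℕ} (i : Fin n) : BraidK.toBraidA n (aK i) = cA n i := by
  rw [aK_of_lt i.isLt]
  exact PresentedGroup.toGroup.of _

theorem BraidK.toBraidA_surjective (n : ℕ) : Function.Surjective (BraidK.toBraidA n) := by
  rw [← MonoidHom.range_eq_top, MonoidHom.range_eq_map, ← PresentedGroup.closure_range_of,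
    MonoidHom.map_closure, ← Set.range_comp, ← closure_range_cA]
  congr 2
  ext i
  exact PresentedGroup.toGroup.of _

/-- The group homomorphism `η : B(K_n) → B(A_n)`, `a_i ↦ c_i`, is
surjective. -/
theorem eta_surjective (n : ℕ) :
    ∃ η : BraidK n →* BraidA n,
      (∀ i : Fin n, η (aK (i : ℕ)) = cA n (i : ℕ)) ∧
      Function.Surjective η :=
  ⟨BraidK.toBraidA n, BraidK.toBraidA_aK, BraidK.toBraidA_surjective n⟩
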